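/- Completeness defect inequality: suppose there exist e₁, …, e_N ∈ V with l_j(e_i) = δ_{ij} (i, j = 1, …, N). Then there exists a constant C > 0 such that for every v ∈ V, ‖ι v‖_W ≤ ε_𝓛 ‖v‖_V + C · max_{1 ≤ j ≤ N} |l_j(v)|. -/
import Mathlib


/-- Completeness defect inequality: let `ι : V → W` be a continuous linear map between
real normed spaces, `l₁, …, l_N` continuous linear functionals on `V`, and suppose there
exist `e₁, …, e_N ∈ V` with `l_j(e_i) = δ_{ij}`. With
`ε = sup { ‖ι w‖ : ‖w‖ ≤ 1, l_j(w) = 0 ∀ j }` the completeness defect, there exists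
`C > 0` such that for every `v ∈ V`, `‖ι v‖ ≤ ε ‖v‖ + C · max_j |l_j(v)|`. -/
theorem completeness_defect_inequality
    {V W : Type*} [NormedAddCommGroup V] [NormedSpace ℝ V]
    [NormedAddCommGroup W] [NormedSpace ℝ W]
    (ι : V →L[ℝ] W) (N : ℕ) (hN : 0 < N) (l : Fin N → (V →L[ℝ] ℝ))
    (e : Fin N → V) (he : ∀ i j : Fin N, l j (e i) = if i = j then 1 else 0)
    (ε : ℝ)
    (hε : ε = sSup {r : ℝ | ∃ w : V, ‖w‖ ≤ 1 ∧ (∀ j, l j w = 0) ∧ r = ‖ι w‖}) :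
    ∃ C > 0, ∀ v : V, ‖ι v‖ ≤ ε * ‖v‖ + C * ⨆ j : Fin N, |l j v| := by
  haveI : Nonempty (Fin N) := Fin.pos_iff_nonempty.mp hN
  have hbdd : BddAbove {r : ℝ | ∃ w : V, ‖w‖ ≤ 1 ∧ (∀ j, l j w = 0) ∧ r = ‖ι w‖} := by
    refine ⟨‖ι‖, ?_⟩
    rintro r ⟨w, hw1, -, rfl⟩
    calc ‖ι w‖ ≤ ‖ι‖ * ‖w‖ := ι.le_opNorm w
      _ ≤ ‖ι‖ * 1 := mul_le_mul_of_nonneg_left hw1 (norm_nonneg ι)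
      _ = ‖ι‖ := mul_one _
  have hε0 : 0 ≤ ε := by
    rw [hε]
    exact le_csSup hbdd ⟨0, by simp, fun j => by simp, by simp⟩
  have key : ∀ w : V, (∀ j, l j w = 0) → ‖ι w‖ ≤ ε * ‖w‖ := by
    intro w hw
    rcases eq_or_ne w 0 with rfl | hne
    · simp
    · have hn : 0 < ‖w‖ := norm_pos_iff.mpr hne
      have hu : ‖ι (‖w‖⁻¹ • w)‖ ≤ ε := by
        rw [hε]
        refine le_csSup hbdd ⟨‖w‖⁻¹ • w, ?_, fun j => by simp [hw j], rfl⟩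
        rw [norm_smul, norm_inv, norm_norm, inv_mul_cancel₀ hn.ne']
      have heq : ‖ι (‖w‖⁻¹ • w)‖ = ‖w‖⁻¹ * ‖ι w‖ := by
        rw [map_smul, norm_smul, norm_inv, norm_norm]
      rw [heq] at hu
      calc ‖ι w‖ = ‖w‖ * (‖w‖⁻¹ * ‖ι w‖) := by field_simp
        _ ≤ ‖w‖ * ε := mul_le_mul_of_nonneg_left hu hn.le
        _ = ε * ‖w‖ := mul_comm _ _
  set A : ℝ := ∑ j, ‖e j‖ with hA
  set B : ℝ := ∑ j, ‖ι (e j)‖ with hB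
  have hA0 : 0 ≤ A := Finset.sum_nonneg fun j _ => norm_nonneg _
  have hB0 : 0 ≤ B := Finset.sum_nonneg fun j _ => norm_nonneg _
  refine ⟨ε * A + B + 1, by positivity, fun v => ?_⟩
  set M : ℝ := ⨆ j : Fin N, |l j v| with hM
  have hMle : ∀ j, |l j v| ≤ M := fun j =>
    le_ciSup (f := fun j : Fin N => |l j v|) (Set.Finite.bddAbove (Set.finite_range _)) j
  have hM0 : 0 ≤ M := le_trans (abs_nonneg _) (hMle (Classical.arbitrary _))
  set w : V := v - ∑ j, (l j v) • e j with hwdef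
  have hlw : ∀ j, l j w = 0 := by
    intro j
    simp only [hwdef, map_sub, map_sum, map_smul, he, smul_eq_mul, mul_ite, mul_one, mul_zero]
    simp
  have hwv : ι v = ι w + ∑ j, (l j v) • ι (e j) := by
    simp [hwdef, map_sub, map_sum, map_smul]
  have h1 : ‖ι v‖ ≤ ‖ι w‖ + M * B := by
    rw [hwv]
    refine (norm_add_le _ _).trans ?_
    gcongr
    refine (norm_sum_le _ _).trans ?_
    rw [hB, Finset.mul_sum]
    refine Finset.sum_le_sum fun j _ => ?_
    rw [norm_smul, Real.norm_eq_abs]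
    exact mul_le_mul_of_nonneg_right (hMle j) (norm_nonneg _)
  have h2 : ‖w‖ ≤ ‖v‖ + M * A := by
    rw [hwdef]
    refine (norm_sub_le _ _).trans ?_
    gcongr
    refine (norm_sum_le _ _).trans ?_
    rw [hA, Finset.mul_sum]
    refine Finset.sum_le_sum fun j _ => ?_
    rw [norm_smul, Real.norm_eq_abs]
    exact mul_le_mul_of_nonneg_right (hMle j) (norm_nonneg _)
  have h3 := key w hlw
  nlinarith [mul_le_mul_of_nonneg_left h2 hε0, mul_nonneg hM0 hB0, hM0]
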